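/- Say that a turn {d, d′} is crossed by an iterate of φ if there exist a generator e ∈ {a, b, c} and an integer k ≥ 1 such that the reduced word of φᵏ(e), written as a sequence of letters u₁u₂⋯u_m, has some consecutive pair u_i, u_{i+1} with {d, d′} = {u_i⁻¹, u_{i+1}}. Then the set of turns crossed by iterates of φ is exactly T = { {c⁻¹, a}, {a⁻¹, b}, {a⁻¹, c}, {b⁻¹, c}, {a⁻¹, a}, {b⁻¹, a} }, and the graph whose vertices are the six directions {a, b, c, a⁻¹, b⁻¹, c⁻¹} and whose edges are the six turns in T is connected (i.e., the local Whitehead graph of φ at the vertex of the rose is connected). -/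

import Mathlib

/-!
Every generator is sent by `φ` to a positive word, so `φᵏ(e)` is the positive (hence reduced)
word obtained by iterating the substitution `a ↦ cab, b ↦ ca, c ↦ acab` on `e`. Two
consecutive letters of a substituted word either lie inside one image (`ca`, `ab`, `ac`), or
straddle two images, pairing a last letter in `{a, b}` with a first letter in `{c, a}`
(`ac`, `aa`, `bc`, `ba`). These six pairs give exactly the turns of `T`, and each already
occurs in `φᵏ(e)` for some `k ≤ 3`. In the Whitehead graph, `a` is joined to `a⁻¹`, `b⁻¹`,
`c⁻¹` and `a⁻¹` to `b`, `c`, so it is connected.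
-/

/-- The endomorphism of the free group `F₃` on generators `a = of 0`, `b = of 1`,
`c = of 2` determined by `φ(a) = cab`, `φ(b) = ca`, `φ(c) = acab`. -/
def phi : Monoid.End (FreeGroup (Fin 3)) :=
  FreeGroup.lift
    ![FreeGroup.of 2 * FreeGroup.of 0 * FreeGroup.of 1,
      FreeGroup.of 2 * FreeGroup.of 0,
      FreeGroup.of 0 * FreeGroup.of 2 * FreeGroup.of 0 * FreeGroup.of 1]

/-- A turn (an unordered pair of directions, a direction being `(i, true)` for the
letter `i` or `(i, false)` for its inverse) is crossed by an iterate of `φ` if,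
for some generator `e` and some `k ≥ 1`, the reduced word of `φᵏ(e)` has a pair of
consecutive letters `u, v` with the turn equal to `{u⁻¹, v}`. -/
def CrossedTurn (t : Sym2 (Fin 3 × Bool)) : Prop :=
  ∃ e : Fin 3, ∃ k : ℕ, 1 ≤ k ∧ ∃ u v : Fin 3 × Bool,
    [u, v] <:+: FreeGroup.toWord ((phi ^ k) (FreeGroup.of e)) ∧
      t = s((u.1, !u.2), v)

/-- The six turns of the local Whitehead graph of `φ`:
`{c⁻¹, a}`, `{a⁻¹, b}`, `{a⁻¹, c}`, `{b⁻¹, c}`, `{a⁻¹, a}`, `{b⁻¹, a}`. -/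
def T : Set (Sym2 (Fin 3 × Bool)) :=
  { s(((2 : Fin 3), false), ((0 : Fin 3), true)),
    s(((0 : Fin 3), false), ((1 : Fin 3), true)),
    s(((0 : Fin 3), false), ((2 : Fin 3), true)),
    s(((1 : Fin 3), false), ((2 : Fin 3), true)),
    s(((0 : Fin 3), false), ((0 : Fin 3), true)),
    s(((1 : Fin 3), false), ((0 : Fin 3), true)) }

namespace FreeGroup

variable {α : Type*}

def ofPosWord (l : List α) : FreeGroup α :=
  mk (l.map (·, true))

@[simp]
theorem ofPosWord_nil : ofPosWord ([] : List α) = 1 := rfl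

@[simp]
theorem ofPosWord_cons (x : α) (l : List α) : ofPosWord (x :: l) = of x * ofPosWord l := by
  simp [ofPosWord, of, mul_mk]

@[simp]
theorem ofPosWord_append (l₁ l₂ : List α) :
    ofPosWord (l₁ ++ l₂) = ofPosWord l₁ * ofPosWord l₂ := by
  simp [ofPosWord, mul_mk]

theorem isReduced_map_true (l : List α) : IsReduced (l.map (·, true)) :=
  (List.isChain_map _).2 (List.pairwise_of_forall fun _ _ _ ↦ rfl).isChain

theorem toWord_ofPosWord [DecidableEq α] (l : List α) :
    toWord (ofPosWord l) = l.map (·, true) := by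
  rw [ofPosWord, toWord_mk, (isReduced_map_true l).reduce_eq]

variable {σ : α → List α}

theorem map_ofPosWord_of_forall_of {f : FreeGroup α →* FreeGroup α}
    (hf : ∀ x, f (of x) = ofPosWord (σ x)) (l : List α) :
    f (ofPosWord l) = ofPosWord (l.flatMap σ) := by
  induction l with
  | nil => simp
  | cons x l ih => simp [ih, hf]

theorem pow_apply_ofPosWord_of_forall_of {f : Monoid.End (FreeGroup α)}
    (hf : ∀ x, f (of x) = ofPosWord (σ x)) (k : ℕ) (l : List α) :
    (f ^ k) (ofPosWord l) = ofPosWord ((List.flatMap σ)^[k] l) := by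
  rw [Monoid.End.coe_pow]
  induction k with
  | zero => rfl
  | succ k ih =>
    rw [Function.iterate_succ_apply', Function.iterate_succ_apply', ih]
    exact map_ofPosWord_of_forall_of (f := f) hf _

end FreeGroup

theorem List.isChain_flatMap_of_forall {α β : Type*} {R : β → β → Prop} {σ : α → List β}
    (hσ : ∀ x, (σ x).IsChain R)
    (hjoin : ∀ x y, ∀ a ∈ (σ x).getLast?, ∀ b ∈ (σ y).head?, R a b) (l : List α) :
    (l.flatMap σ).IsChain R := by
  induction l with
  | nil => exact .nil
  | cons x l ih =>
    have head_mem : ∀ b ∈ (l.flatMap σ).head?, ∃ y, b ∈ (σ y).head? := by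
      clear ih
      induction l with
      | nil => simp
      | cons y l ih' =>
        intro b hb
        rw [flatMap_cons, head?_append] at hb
        cases hy : (σ y).head? with
        | none => rw [hy, Option.none_or] at hb; exact ih' b hb
        | some c => rw [hy, Option.some_or] at hb; exact ⟨y, hy ▸ hb⟩
    rw [flatMap_cons, isChain_append]
    refine ⟨hσ x, ih, fun a ha b hb ↦ ?_⟩
    obtain ⟨y, hy⟩ := head_mem b hb
    exact hjoin x y a ha b hy

open FreeGroup

def phiSubst : Fin 3 → List (Fin 3) := ![[2, 0, 1], [2, 0], [0, 2, 0, 1]]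

theorem phi_of (x : Fin 3) : phi (of x) = ofPosWord (phiSubst x) := by
  refine lift_apply_of.trans ?_
  fin_cases x <;> simp [phiSubst, mul_assoc]

theorem toWord_pow_phi_of (k : ℕ) (e : Fin 3) :
    toWord ((phi ^ k) (of e)) = ((List.flatMap phiSubst)^[k] [e]).map (·, true) := by
  rw [← toWord_ofPosWord, ← pow_apply_ofPosWord_of_forall_of phi_of, ofPosWord_cons,
    ofPosWord_nil, mul_one]

/-- The turn `{u⁻¹, v}` crossed by consecutive letters `u v` lies in `T`. -/
def TurnInT (u v : Fin 3 × Bool) : Prop :=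
  s((u.1, !u.2), v) ∈ T

theorem isChain_turnInT_flatMap_phiSubst (l : List (Fin 3)) :
    ((l.flatMap phiSubst).map (·, true)).IsChain TurnInT := by
  rw [List.isChain_map]
  refine List.isChain_flatMap_of_forall (fun x ↦ ?_) (fun x y ↦ ?_) l <;>
    fin_cases x <;> try fin_cases y
  all_goals simp [phiSubst, TurnInT, T]

theorem mem_T_of_crossedTurn {t : Sym2 (Fin 3 × Bool)} (ht : CrossedTurn t) : t ∈ T := by
  obtain ⟨e, k, hk, u, v, huv, rfl⟩ := ht
  obtain ⟨j, rfl⟩ := Nat.exists_eq_add_of_le' hk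
  rw [toWord_pow_phi_of, Function.iterate_succ_apply'] at huv
  exact (List.isChain_pair (R := TurnInT)).1 ((isChain_turnInT_flatMap_phiSubst _).infix huv)

theorem crossedTurn_of_infix (e : Fin 3) (k : ℕ) (hk : 1 ≤ k) {x y : Fin 3}
    (h : [x, y] <:+: (List.flatMap phiSubst)^[k] [e]) :
    CrossedTurn s((x, false), (y, true)) :=
  ⟨e, k, hk, (x, true), (y, true), by rw [toWord_pow_phi_of]; exact h.map (·, true), rfl⟩

theorem crossedTurn_of_mem_T {t : Sym2 (Fin 3 × Bool)} (ht : t ∈ T) : CrossedTurn t := by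
  simp only [T, Set.mem_insert_iff, Set.mem_singleton_iff] at ht
  rcases ht with rfl | rfl | rfl | rfl | rfl | rfl
  · exact crossedTurn_of_infix 0 1 le_rfl (by decide)
  · exact crossedTurn_of_infix 0 1 le_rfl (by decide)
  · exact crossedTurn_of_infix 2 1 le_rfl (by decide)
  · exact crossedTurn_of_infix 0 2 (by norm_num) (by decide)
  · exact crossedTurn_of_infix 0 3 (by norm_num) (by decide)
  · exact crossedTurn_of_infix 2 2 (by norm_num) (by decide)

theorem whiteheadGraph_connected :
    (SimpleGraph.fromRel (fun x y : Fin 3 × Bool => s(x, y) ∈ T)).Connected := by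
  set G := SimpleGraph.fromRel (fun x y : Fin 3 × Bool => s(x, y) ∈ T)
  have reachable_of_mem {x y : Fin 3 × Bool} (hne : x ≠ y) (hmem : s(x, y) ∈ T) :
      G.Reachable x y :=
    (SimpleGraph.fromRel_adj _ x y |>.2 ⟨hne, .inl hmem⟩).reachable
  have hub : ∀ z, G.Reachable (0, true) z := by
    have a_inv : G.Reachable (0, true) (0, false) :=
      (reachable_of_mem (by decide) (by simp [T])).symm
    intro z
    fin_cases z
    · rfl
    · exact a_inv
    · exact a_inv.trans (reachable_of_mem (by decide) (by simp [T]))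
    · exact (reachable_of_mem (by decide) (by simp [T])).symm
    · exact a_inv.trans (reachable_of_mem (by decide) (by simp [T]))
    · exact (reachable_of_mem (by decide) (by simp [T])).symm
  exact .mk fun x y ↦ (hub x).symm.trans (hub y)

/-- The turns crossed by iterates of `φ` are exactly the six turns in `T`, and
the local Whitehead graph of `φ` (the graph on the six directions whose edges are
the turns in `T`) is connected. -/
theorem local_whitehead_graph_connected :
    {t : Sym2 (Fin 3 × Bool) | CrossedTurn t} = T ∧
      (SimpleGraph.fromRel (fun x y : Fin 3 × Bool => s(x, y) ∈ T)).Connected :=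
  ⟨Set.ext fun _ ↦ ⟨mem_T_of_crossedTurn, crossedTurn_of_mem_T⟩, whiteheadGraph_connected⟩
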